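/- Under the exact DM-ADMM updates with ρ ≤ (ξ - σ)/(2(n-1)) for some σ > 0, where the f_i are proper, lower semi-continuous, convex, and ∑ f_i is strongly convex with parameter 2ξ, the iterates satisfy r^k → 0, x^k → x*, and p^k = ∑_i f_i(x_i^k) → p* = ∑_i f_i(x*_i) as k → ∞, where x* is the unique global minimizer of ∑_i f_i(x_i) subject to ∑_i x_i = C. -/

import Mathlib

/-!
Write `e k = x k - x*`. Each agent's update minimizes a function whose difference with
`ρ/2 z²` is convex, and `x*` minimizes the Lagrangian, whose difference with `ξ ‖v‖²` is
convex. Quadratic growth at both minimizers, evaluated at `x*` and at `x (k+1)`, gives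
`(y (k+1) - y*) r (k+1) + ρ (‖e (k+1)‖² - ⟪e (k+1), e k⟫ + r k r (k+1)) + ξ ‖e (k+1)‖² ≤ 0`.
Combined with the dual update and `(r (k+1) - r k)² ≤ n ‖e (k+1) - e k‖²`, this shows that
`V k = (y (k+1) - y*)² + ρ² (2n - 1) ‖e k‖²` drops by at least
`ρ² (r k)² + 2ρσ ‖e (k+1)‖²` at each step; the step-size bound is exactly what makes the
coefficient of `‖e (k+1)‖²` at least `2ρσ`. So both sequences are summable, hence `r k → 0`
and `x k → x*`, and `p k → p*` because convex functions on `ℝ` are continuous.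
-/

open Filter Topology Set
open scoped RealInnerProductSpace

theorem UniformConvexOn.add_le_of_isMinOn {E : Type*} [NormedAddCommGroup E] [NormedSpace ℝ E]
    {s : Set E} {φ : ℝ → ℝ} {f : E → ℝ} {a b : E} (hf : UniformConvexOn s φ f)
    (ha : IsMinOn f s a) (has : a ∈ s) (hb : b ∈ s) : f a + φ ‖a - b‖ ≤ f b := by
  have hsegment : ∀ t ∈ Ioc (0 : ℝ) 1, f a + (1 - t) * φ ‖a - b‖ ≤ f b := by
    rintro t ⟨ht₀, ht₁⟩
    have hcomb : (1 - t) + t = 1 := sub_add_cancel 1 t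
    have hmid := hf.2 has hb (sub_nonneg.2 ht₁) ht₀.le hcomb
    have hmin := ha (hf.1 has hb (sub_nonneg.2 ht₁) ht₀.le hcomb)
    simp only [smul_eq_mul, mem_ofPred_eq] at hmid hmin
    have : t * (f a + (1 - t) * φ ‖a - b‖) ≤ t * f b := by linarith
    exact le_of_mul_le_mul_left this ht₀
  have hlim : Tendsto (fun t : ℝ => f a + (1 - t) * φ ‖a - b‖) (𝓝[>] 0) (𝓝 (f a + φ ‖a - b‖)) :=
    tendsto_nhdsWithin_of_tendsto_nhds <|
      (by fun_prop : Continuous fun t : ℝ => f a + (1 - t) * φ ‖a - b‖).tendsto' 0 _ (by simp)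
  exact le_of_tendsto hlim (eventually_of_mem (Ioc_mem_nhdsGT one_pos) hsegment)

theorem ConvexOn.add_mul_sq_norm_sub_le_of_forall_le {E : Type*} [NormedAddCommGroup E]
    [InnerProductSpace ℝ E] {F : E → ℝ} {c : ℝ} {a : E}
    (hF : ConvexOn ℝ univ fun z => F z - c * ‖z‖ ^ 2) (ha : ∀ z, F a ≤ F z) (z : E) :
    F a + c * ‖a - z‖ ^ 2 ≤ F z := by
  have hstrong : StrongConvexOn univ (2 * c) F :=
    strongConvexOn_iff_convex.2 (by simpa only [mul_div_cancel_left₀ c two_ne_zero] using hF)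
  simpa only [mul_div_cancel_left₀ c two_ne_zero] using
    UniformConvexOn.add_le_of_isMinOn hstrong (isMinOn_univ_iff.2 ha) (mem_univ a) (mem_univ z)

theorem ConvexOn.augmented_add_sq_le {g : ℝ → ℝ} (hg : ConvexOn ℝ univ g) {b a ρ m : ℝ}
    (hm : ∀ z, g m + b * (m - a) + ρ / 2 * (m - a) ^ 2 ≤ g z + b * (z - a) + ρ / 2 * (z - a) ^ 2)
    (z : ℝ) :
    g m + b * (m - a) + ρ / 2 * (m - a) ^ 2 + ρ / 2 * (m - z) ^ 2
      ≤ g z + b * (z - a) + ρ / 2 * (z - a) ^ 2 := by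
  have hconv : ConvexOn ℝ univ fun z : ℝ =>
      g z + b * (z - a) + ρ / 2 * (z - a) ^ 2 - ρ / 2 * ‖z‖ ^ 2 := by
    refine (hg.add ((((b - ρ * a) • LinearMap.id : ℝ →ₗ[ℝ] ℝ).convexOn convex_univ).add_const
      (ρ / 2 * a ^ 2 - b * a))).congr fun z _ => ?_
    simp only [Pi.add_apply, LinearMap.smul_apply, LinearMap.id_apply, smul_eq_mul,
      Real.norm_eq_abs, sq_abs]
    ring
  simpa only [Real.norm_eq_abs, sq_abs] using hconv.add_mul_sq_norm_sub_le_of_forall_le hm z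

theorem EuclideanSpace.sq_sum_le_card_mul_norm_sq {ι : Type*} [Fintype ι]
    (v : EuclideanSpace ℝ ι) : (∑ i, v i) ^ 2 ≤ Fintype.card ι * ‖v‖ ^ 2 := by
  rw [EuclideanSpace.real_norm_sq_eq]
  exact sq_sum_le_card_mul_sum_sq

theorem summable_of_add_le_of_nonneg {W g : ℕ → ℝ} (hW : ∀ k, 0 ≤ W k) (hg : ∀ k, 0 ≤ g k)
    (h : ∀ k, W (k + 1) + g k ≤ W k) : Summable g := by
  have hpartial : ∀ K, ∑ k ∈ Finset.range K, g k + W K ≤ W 0 := by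
    intro K
    induction K with
    | zero => simp
    | succ K ih => rw [Finset.sum_range_succ]; linarith [h K]
  exact summable_of_sum_range_le hg fun K => by linarith [hpartial K, hW K]

theorem tendsto_zero_of_summable_mul_norm_sq {E : Type*} [SeminormedAddCommGroup E]
    {u : ℕ → E} {c : ℝ} (hc : 0 < c) (h : Summable fun k => c * ‖u k‖ ^ 2) :
    Tendsto u atTop (𝓝 0) := by
  have hsq : Tendsto (fun k => ‖u k‖ ^ 2) atTop (𝓝 0) := by
    simpa [hc.ne'] using h.tendsto_atTop_zero.const_mul c⁻¹
  rw [tendsto_zero_iff_norm_tendsto_zero]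
  simpa [Real.sqrt_sq (norm_nonneg _)] using hsq.sqrt

def lagrangian {n : ℕ} (f : Fin n → ℝ → ℝ) (C y : ℝ) (v : EuclideanSpace ℝ (Fin n)) : ℝ :=
  ∑ i, f i (v i) + y * (∑ i, v i - C)

theorem lagrangian_add_mul_sq_norm_sub_le {n : ℕ} {f : Fin n → ℝ → ℝ} {C ξ ystar : ℝ}
    {xstar : EuclideanSpace ℝ (Fin n)}
    (hstrong : ConvexOn ℝ univ
      fun x : EuclideanSpace ℝ (Fin n) => (∑ i, f i (x i)) - ξ * ‖x‖ ^ 2)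
    (hsaddle : ∀ v, lagrangian f C ystar xstar ≤ lagrangian f C ystar v)
    (v : EuclideanSpace ℝ (Fin n)) :
    lagrangian f C ystar xstar + ξ * ‖xstar - v‖ ^ 2 ≤ lagrangian f C ystar v := by
  have hlinear : ConvexOn ℝ univ fun v : EuclideanSpace ℝ (Fin n) => ystar * (∑ i, v i - C) := by
    refine ((ystar • ∑ i, (EuclideanSpace.proj i :
      EuclideanSpace ℝ (Fin n) →L[ℝ] ℝ).toLinearMap).convexOn convex_univ
        |>.add_const (-(ystar * C))).congr fun v _ => ?_
    simp only [LinearMap.coe_smul, LinearMap.coe_sum, ContinuousLinearMap.coe_coe,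
      EuclideanSpace.coe_proj, Pi.add_apply, Pi.smul_apply, Finset.sum_apply, smul_eq_mul]
    ring
  refine ConvexOn.add_mul_sq_norm_sub_le_of_forall_le ((hstrong.add hlinear).congr
    fun v _ => ?_) hsaddle v
  simp only [lagrangian, Pi.add_apply]
  ring

/-- For `n = 1` the hypothesis reads `ρ ≤ 0`, since division by zero gives `0`. -/
theorem two_mul_mul_sub_one_le_of_le_div {n : ℕ} {ρ ξ σ : ℝ} (hn : 0 < n) (hρ : 0 < ρ)
    (hρξ : ρ ≤ (ξ - σ) / (2 * ((n : ℝ) - 1))) : 2 * ρ * ((n : ℝ) - 1) ≤ ξ - σ := by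
  obtain rfl | hn2 := (Nat.one_le_iff_ne_zero.2 hn.ne').eq_or_lt
  · norm_num at hρξ
    linarith
  · have hpos : (0 : ℝ) < 2 * ((n : ℝ) - 1) := by
      have : (2 : ℝ) ≤ n := by exact_mod_cast hn2
      linarith
    linarith [(le_div_iff₀ hpos).1 hρξ]

namespace DMADMM

structure IsIterates {n : ℕ} (f : Fin n → ℝ → ℝ) (C ρ : ℝ) (x : ℕ → EuclideanSpace ℝ (Fin n))
    (y r : ℕ → ℝ) : Prop where
  residual_eq : ∀ k, r k = ∑ i, x k i - C
  dual_succ : ∀ k, y (k + 1) = y k + ρ * r k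
  primal_le : ∀ k i (z : ℝ),
    f i (x (k + 1) i) + y (k + 1) * (x (k + 1) i + r k - x k i)
        + (ρ / 2) * (x (k + 1) i + r k - x k i) ^ 2
      ≤ f i z + y (k + 1) * (z + r k - x k i) + (ρ / 2) * (z + r k - x k i) ^ 2

variable {n : ℕ} {f : Fin n → ℝ → ℝ} {C ρ : ℝ} {x : ℕ → EuclideanSpace ℝ (Fin n)}
  {y r : ℕ → ℝ} {xstar : EuclideanSpace ℝ (Fin n)}

theorem IsIterates.sum_sub_apply (h : IsIterates f C ρ x y r) (hfeas : ∑ i, xstar i = C)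
    (k : ℕ) : ∑ i, (x k - xstar) i = r k := by
  simp only [PiLp.sub_apply, Finset.sum_sub_distrib, hfeas, h.residual_eq]

theorem IsIterates.agent_le (h : IsIterates f C ρ x y r) (hconv : ∀ i, ConvexOn ℝ univ (f i))
    (k : ℕ) (i : Fin n) :
    f i (x (k + 1) i) - f i (xstar i) + y (k + 1) * (x (k + 1) - xstar) i
      + ρ * ((x (k + 1) - xstar) i ^ 2 - (x (k + 1) - xstar) i * (x k - xstar) i
        + r k * (x (k + 1) - xstar) i) ≤ 0 := by
  have := (hconv i).augmented_add_sq_le (a := x k i - r k)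
    (fun z => by simpa only [sub_sub_eq_add_sub] using h.primal_le k i z) (xstar i)
  simp only [PiLp.sub_apply]
  linear_combination this

theorem IsIterates.sum_le (h : IsIterates f C ρ x y r) (hconv : ∀ i, ConvexOn ℝ univ (f i))
    (hfeas : ∑ i, xstar i = C) (k : ℕ) :
    ∑ i, f i (x (k + 1) i) - ∑ i, f i (xstar i) + y (k + 1) * r (k + 1)
      + ρ * (‖x (k + 1) - xstar‖ ^ 2 - ⟪x (k + 1) - xstar, x k - xstar⟫ + r k * r (k + 1))
      ≤ 0 := by
  refine le_of_eq_of_le ?_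
    (Finset.sum_nonpos (s := Finset.univ) fun i _ => h.agent_le hconv (xstar := xstar) k i)
  rw [EuclideanSpace.real_norm_sq_eq, PiLp.inner_apply, ← h.sum_sub_apply hfeas (k + 1)]
  simp only [Real.inner_apply, ← Finset.mul_sum, Finset.sum_add_distrib, Finset.sum_sub_distrib]

theorem IsIterates.step_le {ξ ystar : ℝ} (h : IsIterates f C ρ x y r)
    (hconv : ∀ i, ConvexOn ℝ univ (f i))
    (hstrong : ConvexOn ℝ univ
      fun x : EuclideanSpace ℝ (Fin n) => (∑ i, f i (x i)) - ξ * ‖x‖ ^ 2)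
    (hsaddle : ∀ v, lagrangian f C ystar xstar ≤ lagrangian f C ystar v)
    (hfeas : ∑ i, xstar i = C) (k : ℕ) :
    (y (k + 1) - ystar) * r (k + 1)
      + ρ * (‖x (k + 1) - xstar‖ ^ 2 - ⟪x (k + 1) - xstar, x k - xstar⟫ + r k * r (k + 1))
      + ξ * ‖x (k + 1) - xstar‖ ^ 2 ≤ 0 := by
  have hgrowth := lagrangian_add_mul_sq_norm_sub_le hstrong hsaddle (x (k + 1))
  simp only [lagrangian, hfeas, sub_self, mul_zero, add_zero, ← h.residual_eq,
    norm_sub_rev xstar] at hgrowth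
  linarith [h.sum_le hconv hfeas k]

theorem IsIterates.lyapunov_le {ξ σ ystar : ℝ} (h : IsIterates f C ρ x y r)
    (hconv : ∀ i, ConvexOn ℝ univ (f i))
    (hstrong : ConvexOn ℝ univ
      fun x : EuclideanSpace ℝ (Fin n) => (∑ i, f i (x i)) - ξ * ‖x‖ ^ 2)
    (hsaddle : ∀ v, lagrangian f C ystar xstar ≤ lagrangian f C ystar v)
    (hfeas : ∑ i, xstar i = C) (hρ : 0 < ρ) (hn : 0 < n)
    (hgain : 2 * ρ * ((n : ℝ) - 1) ≤ ξ - σ) (k : ℕ) :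
    (y (k + 2) - ystar) ^ 2 + ρ ^ 2 * (2 * n - 1) * ‖x (k + 1) - xstar‖ ^ 2
        + (ρ ^ 2 * r k ^ 2 + 2 * ρ * σ * ‖x (k + 1) - xstar‖ ^ 2)
      ≤ (y (k + 1) - ystar) ^ 2 + ρ ^ 2 * (2 * n - 1) * ‖x k - xstar‖ ^ 2 := by
  have hstep := h.step_le hconv hstrong hsaddle hfeas k
  have hsum := h.sum_sub_apply hfeas
  set e := x k - xstar
  set e' := x (k + 1) - xstar
  have hpolar : 2 * ⟪e', e⟫ = ‖e'‖ ^ 2 + ‖e‖ ^ 2 - ‖e' - e‖ ^ 2 := by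
    rw [norm_sub_sq_real e' e]; ring
  have hcs : (r (k + 1) - r k) ^ 2 ≤ n * ‖e' - e‖ ^ 2 := by
    have := EuclideanSpace.sq_sum_le_card_mul_norm_sq (e' - e)
    simp only [Fintype.card_fin, PiLp.sub_apply, Finset.sum_sub_distrib] at this
    rwa [← hsum k, ← hsum (k + 1)]
  have hdiff : ‖e' - e‖ ^ 2 ≤ 2 * ‖e'‖ ^ 2 + 2 * ‖e‖ ^ 2 := by
    linarith [norm_sub_sq_real e' e, norm_add_sq_real e' e, sq_nonneg ‖e' + e‖]
  have hn1 : (0 : ℝ) ≤ n - 1 := sub_nonneg.2 (Nat.one_le_cast.2 hn)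
  rw [h.dual_succ (k + 1)]
  linarith [congrArg (ρ ^ 2 * ·) hpolar,
    mul_le_mul_of_nonneg_left hstep (by positivity : (0 : ℝ) ≤ 2 * ρ),
    mul_le_mul_of_nonneg_left hcs (sq_nonneg ρ),
    mul_le_mul_of_nonneg_left hdiff (mul_nonneg (sq_nonneg ρ) hn1),
    mul_le_mul_of_nonneg_left hgain (by positivity : (0 : ℝ) ≤ 2 * ρ * ‖e'‖ ^ 2)]

end DMADMM

theorem dm_admm_convergence_general
    (n : ℕ) (f : Fin n → ℝ → ℝ) (C ρ ξ σ ystar : ℝ)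
    (hσ : 0 < σ) (hρ : 0 < ρ) (hρξ : ρ ≤ (ξ - σ) / (2 * ((n : ℝ) - 1)))
    (hconv : ∀ i, ConvexOn ℝ Set.univ (f i))
    (hstrong : ConvexOn ℝ Set.univ
      (fun x : EuclideanSpace ℝ (Fin n) => (∑ i, f i (x i)) - ξ * ‖x‖ ^ 2))
    (xstar : EuclideanSpace ℝ (Fin n)) (hfeas : ∑ i, xstar i = C)
    (hsaddle : ∀ x : EuclideanSpace ℝ (Fin n),
      (∑ i, f i (xstar i)) + ystar * (∑ i, xstar i - C)
        ≤ (∑ i, f i (x i)) + ystar * (∑ i, x i - C))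
    (x : ℕ → EuclideanSpace ℝ (Fin n)) (y : ℕ → ℝ) (r : ℕ → ℝ)
    (hr : ∀ k, r k = ∑ i, x k i - C)
    (hy : ∀ k, y (k + 1) = y k + ρ * r k)
    (hupd : ∀ k, ∀ i, ∀ z : ℝ,
      f i (x (k + 1) i) + y (k + 1) * (x (k + 1) i + r k - x k i)
          + (ρ / 2) * (x (k + 1) i + r k - x k i) ^ 2
        ≤ f i z + y (k + 1) * (z + r k - x k i)
          + (ρ / 2) * (z + r k - x k i) ^ 2) :
    Filter.Tendsto r Filter.atTop (nhds 0) ∧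
      Filter.Tendsto x Filter.atTop (nhds xstar) ∧
      Filter.Tendsto (fun k => ∑ i, f i (x k i)) Filter.atTop
        (nhds (∑ i, f i (xstar i))) := by
  obtain rfl | hn := Nat.eq_zero_or_pos n
  · have hC : C = 0 := by simpa using hfeas.symm
    obtain rfl : x = fun _ => xstar := funext fun _ => Subsingleton.elim _ _
    obtain rfl : r = fun _ => 0 := funext fun k => by simp [hr, hC]
    exact ⟨tendsto_const_nhds, tendsto_const_nhds, tendsto_const_nhds⟩
  have hgain := two_mul_mul_sub_one_le_of_le_div hn hρ hρξ
  have hiter : DMADMM.IsIterates f C ρ x y r := ⟨hr, hy, hupd⟩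
  have hn1 : (1 : ℝ) ≤ n := by exact_mod_cast hn
  have hsum : Summable fun k => ρ ^ 2 * r k ^ 2 + 2 * ρ * σ * ‖x (k + 1) - xstar‖ ^ 2 :=
    summable_of_add_le_of_nonneg
      (W := fun k => (y (k + 1) - ystar) ^ 2 + ρ ^ 2 * (2 * n - 1) * ‖x k - xstar‖ ^ 2)
      (fun k => add_nonneg (sq_nonneg _) (mul_nonneg (mul_nonneg (sq_nonneg ρ) (by linarith))
        (sq_nonneg _)))
      (fun k => by positivity) (hiter.lyapunov_le hconv hstrong hsaddle hfeas hρ hn hgain)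
  have hr_lim : Tendsto r atTop (𝓝 0) :=
    tendsto_zero_of_summable_mul_norm_sq (pow_pos hρ 2) <| by
      simpa only [Real.norm_eq_abs, sq_abs] using hsum.of_nonneg_of_le (fun k => by positivity)
        fun k => le_add_of_nonneg_right (by positivity)
  have hx_lim : Tendsto x atTop (𝓝 xstar) := by
    have := tendsto_zero_of_summable_mul_norm_sq (by positivity : 0 < 2 * ρ * σ) <|
      hsum.of_nonneg_of_le (fun k => by positivity) fun k => le_add_of_nonneg_left (by positivity)
    exact (tendsto_add_atTop_iff_nat 1).1 (tendsto_sub_nhds_zero_iff.1 this)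
  have hcont : Continuous fun v : EuclideanSpace ℝ (Fin n) => ∑ i, f i (v i) :=
    continuous_finsetSum _ fun i _ => (continuousOn_univ.1
      ((hconv i).continuousOn isOpen_univ)).comp (PiLp.continuous_apply 2 _ i)
  exact ⟨hr_lim, hx_lim, (hcont.tendsto xstar).comp hx_lim⟩

/-- Theorem 1: convergence of exact DM-ADMM — residual, primal variable,
and objective value all converge. -/
theorem dm_admm_convergence
    (n : ℕ) (f : Fin n → ℝ → ℝ) (C ρ ξ σ ystar : ℝ)
    (hσ : 0 < σ) (hρ : 0 < ρ) (hρξ : ρ ≤ (ξ - σ) / (2 * ((n : ℝ) - 1)))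
    (hξ : 0 < ξ)
    (hconv : ∀ i, ConvexOn ℝ Set.univ (f i))
    (hlsc : ∀ i, LowerSemicontinuous (f i))
    (hstrong : ConvexOn ℝ Set.univ
      (fun x : EuclideanSpace ℝ (Fin n) => (∑ i, f i (x i)) - ξ * ‖x‖ ^ 2))
    (xstar : EuclideanSpace ℝ (Fin n)) (hfeas : ∑ i, xstar i = C)
    (hmin : ∀ z : EuclideanSpace ℝ (Fin n), ∑ i, z i = C →
      ∑ i, f i (xstar i) ≤ ∑ i, f i (z i))
    (huniq : ∀ z : EuclideanSpace ℝ (Fin n), ∑ i, z i = C →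
      (∀ w : EuclideanSpace ℝ (Fin n), ∑ i, w i = C →
        ∑ i, f i (z i) ≤ ∑ i, f i (w i)) → z = xstar)
    (hsaddle : ∀ x : EuclideanSpace ℝ (Fin n),
      (∑ i, f i (xstar i)) + ystar * (∑ i, xstar i - C)
        ≤ (∑ i, f i (x i)) + ystar * (∑ i, x i - C))
    (x : ℕ → EuclideanSpace ℝ (Fin n)) (y : ℕ → ℝ) (r : ℕ → ℝ)
    (hr : ∀ k, r k = ∑ i, x k i - C)
    (hy : ∀ k, y (k + 1) = y k + ρ * r k)
    (hupd : ∀ k, ∀ i, ∀ z : ℝ,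
      f i (x (k + 1) i) + y (k + 1) * (x (k + 1) i + r k - x k i)
          + (ρ / 2) * (x (k + 1) i + r k - x k i) ^ 2
        ≤ f i z + y (k + 1) * (z + r k - x k i)
          + (ρ / 2) * (z + r k - x k i) ^ 2) :
    Filter.Tendsto r Filter.atTop (nhds 0) ∧
      Filter.Tendsto x Filter.atTop (nhds xstar) ∧
      Filter.Tendsto (fun k => ∑ i, f i (x k i)) Filter.atTop
        (nhds (∑ i, f i (xstar i))) :=
  dm_admm_convergence_general n f C ρ ξ σ ystar hσ hρ hρξ hconv hstrong xstar hfeas hsaddle x y r hr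
    hy hupd
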